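/- arXiv:2603.10572 — 2 statements merged into one kernel-verified Lean document; each statement's English description precedes it below -/
import Mathlib

section
/- Under the Bellman equation V*(x) = max_u E_w[r(x,u) + γ V*(F(x,u,w))] with γ ∈ (0,1), rewards bounded above by R_max < 0 outside the goal set, and W := -V*, for any x with 0 < W(x) ≤ W_max where W_max < |R_max|/(1-γ), the optimal action u*(x) satisfies E_w[W(F(x,u*(x),w))] ≤ c·W(x) with c = (1/γ)(1 + R_max/W_max), and c < 1. -/
/-!
Evaluating the Bellman equation at the optimal action gives `γ E[W(F)] = r + W(x) ≤ Rmax + W(x)`.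
Since `Rmax < 0`, on `W(x) ≤ Wmax` the reward bound satisfies `Rmax ≤ (Rmax / Wmax) W(x)`, so the
per-step cost removes at least the fraction `|Rmax| / Wmax` of `W(x)`; this beats the discount loss
`1/γ` exactly when `Wmax < |Rmax| / (1 - γ)`.
-/

open MeasureTheory

lemma integral_const_add_const_mul {Ω : Type*} [MeasurableSpace Ω] {ν : Measure Ω}
    [IsProbabilityMeasure ν] {f : Ω → ℝ} (hf : Integrable f ν) (a b : ℝ) :
    ∫ w, (a + b * f w) ∂ν = a + b * ∫ w, f w ∂ν := by
  rw [integral_add (integrable_const a) (hf.const_mul b), integral_const_mul]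
  simp

lemma contraction_rate_lt_one {γ R Wmax : ℝ} (hγ : γ ∈ Set.Ioo (0 : ℝ) 1) (hR : R < 0)
    (hWmaxPos : 0 < Wmax) (hWmax : Wmax < |R| / (1 - γ)) :
    1 / γ * (1 + R / Wmax) < 1 := by
  obtain ⟨hγ0, hγ1⟩ := hγ
  rw [abs_of_neg hR, lt_div_iff₀ (by linarith)] at hWmax
  have hRW : R / Wmax < γ - 1 := by
    rw [div_lt_iff₀ hWmaxPos]
    nlinarith
  rw [one_div_mul_eq_div, div_lt_one hγ0]
  linarith

lemma add_le_one_add_div_mul {R Wmax w : ℝ} (hR : R ≤ 0) (hWmaxPos : 0 < Wmax) (hw : w ≤ Wmax) :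
    R + w ≤ (1 + R / Wmax) * w := by
  have h : R * (1 - w / Wmax) ≤ 0 :=
    mul_nonpos_of_nonpos_of_nonneg hR (sub_nonneg.mpr ((div_le_one hWmaxPos).mpr hw))
  have h' : (1 + R / Wmax) * w = R + w - R * (1 - w / Wmax) := by
    field_simp
    ring
  linarith

lemma le_contraction_mul {γ R Wmax r w e : ℝ} (hγ : 0 < γ) (hR : R ≤ 0) (hWmaxPos : 0 < Wmax)
    (hr : r ≤ R) (hw : w ≤ Wmax) (he : γ * e = r + w) :
    e ≤ 1 / γ * (1 + R / Wmax) * w := by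
  have hbound : r + w ≤ (1 + R / Wmax) * w := by
    linarith [add_le_one_add_div_mul hR hWmaxPos hw]
  rw [mul_assoc, one_div_mul_eq_div, le_div_iff₀ hγ, mul_comm, he]
  exact hbound

theorem value_function_is_stochastic_CLF_general
    {X U Wsp : Type*} [MeasurableSpace Wsp]
    (ν : Measure Wsp) [IsProbabilityMeasure ν]
    (γ : ℝ) (hγ : γ ∈ Set.Ioo (0 : ℝ) 1)
    (r : X → U → ℝ) (F : X → U → Wsp → X) (G : Set X)
    (Rmax : ℝ) (hRmax : Rmax < 0)
    (h_out_reward : ∀ x ∉ G, ∀ u, r x u ≤ Rmax)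
    (V : X → ℝ) (Q : X → U → ℝ) (ustar : X → U)
    -- Bellman equation `Q*(x,u) = E_w[r(x,u) + γ V*(F(x,u,w))]`
    (hBellman : ∀ x u, Q x u = ∫ w, (r x u + γ * V (F x u w)) ∂ν)
    -- optimality: `V*(x) = max_u Q*(x,u)`, attained by `u*(x)`
    (hOpt : ∀ x, V x = Q x (ustar x))
    (hInt : ∀ x u, Integrable (fun w => V (F x u w)) ν)
    (Wfun : X → ℝ) (hW : ∀ x, Wfun x = -V x)
    (Wmax : ℝ) (hWmax : Wmax < |Rmax| / (1 - γ)) (hWmaxPos : 0 < Wmax)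
    (c : ℝ) (hc : c = (1 / γ) * (1 + Rmax / Wmax)) :
    c < 1 ∧
      ∀ x ∉ G, 0 < Wfun x → Wfun x ≤ Wmax →
        (∫ w, Wfun (F x (ustar x) w) ∂ν) ≤ c * Wfun x := by
  subst hc
  refine ⟨contraction_rate_lt_one hγ hRmax hWmaxPos hWmax, fun x hx _ hle => ?_⟩
  have hVx : V x = r x (ustar x) + γ * ∫ w, V (F x (ustar x) w) ∂ν := by
    rw [hOpt, hBellman, integral_const_add_const_mul (hInt x (ustar x))]
  have hEW : ∫ w, Wfun (F x (ustar x) w) ∂ν = -∫ w, V (F x (ustar x) w) ∂ν := by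
    simp only [hW, integral_neg]
  refine le_contraction_mul hγ.1 hRmax.le hWmaxPos (h_out_reward x hx (ustar x)) hle ?_
  rw [hEW, hW]
  linarith

/-- Value function as a stochastic CLF (decrease condition): under the Bellman
equation with strictly negative rewards outside the goal set, `W = -V*` contracts
in expectation under the optimal action with rate `c = (1/γ)(1 + Rmax/Wmax) < 1`,
on the region `0 < W(x) ≤ Wmax` with `Wmax < |Rmax|/(1-γ)`. -/
theorem value_function_is_stochastic_CLF
    {X U Wsp : Type*} [MeasurableSpace Wsp]
    (ν : Measure Wsp) [IsProbabilityMeasure ν]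
    (γ : ℝ) (hγ : γ ∈ Set.Ioo (0 : ℝ) 1)
    (r : X → U → ℝ) (F : X → U → Wsp → X) (G : Set X)
    (Rmax : ℝ) (hRmax : Rmax < 0)
    (h_out_reward : ∀ x ∉ G, ∀ u, r x u ≤ Rmax)
    (V : X → ℝ) (Q : X → U → ℝ) (ustar : X → U)
    -- Bellman equation `Q*(x,u) = E_w[r(x,u) + γ V*(F(x,u,w))]`
    (hBellman : ∀ x u, Q x u = ∫ w, (r x u + γ * V (F x u w)) ∂ν)
    -- optimality: `V*(x) = max_u Q*(x,u)`, attained by `u*(x)`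
    (hOpt : ∀ x, V x = Q x (ustar x))
    (hMax : ∀ x u, Q x u ≤ V x)
    (hInt : ∀ x u, Integrable (fun w => V (F x u w)) ν)
    (Wfun : X → ℝ) (hW : ∀ x, Wfun x = -V x)
    (Wmax : ℝ) (hWmax : Wmax < |Rmax| / (1 - γ)) (hWmaxPos : 0 < Wmax)
    (c : ℝ) (hc : c = (1 / γ) * (1 + Rmax / Wmax)) :
    c < 1 ∧
      ∀ x ∉ G, 0 < Wfun x → Wfun x ≤ Wmax →
        (∫ w, Wfun (F x (ustar x) w) ∂ν) ≤ c * Wfun x :=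
  value_function_is_stochastic_CLF_general ν γ hγ r F G Rmax hRmax h_out_reward V Q ustar hBellman
    hOpt hInt Wfun hW Wmax hWmax hWmaxPos c hc
end

section
/- Under the hypotheses of the value-function-CLF theorem (γ ∈ (0,1), reward ≤ R_max < 0 outside the absorbing zero-reward goal set, W = -V*, η ∈ (0,|R_max|], and W_max < (|R_max| - γη)/(1-γ)), for every x with 0 < W(x) ≤ W_max the expected one-step decrease satisfies ΔW := E_w[W(F(x,u*(x),w))] - W(x) ≤ -min(W(x), η). -/
open MeasureTheory

/-- Value function as a finite-time stochastic CLF: under the Bellman equation with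
rewards at most `Rmax < 0` outside the goal set, `W = -V*` satisfies the finite-time
decrease condition `ΔW ≤ -min(W(x), η)` under the optimal action, on the region
`0 < W(x) ≤ Wmax` with `η ∈ (0, |Rmax|]` and `Wmax < (|Rmax| - γη)/(1-γ)`. -/
theorem value_function_is_finite_time_CLF
    {X U Wsp : Type*} [MeasurableSpace Wsp]
    (ν : Measure Wsp) [IsProbabilityMeasure ν]
    (γ : ℝ) (hγ : γ ∈ Set.Ioo (0 : ℝ) 1)
    (r : X → U → ℝ) (F : X → U → Wsp → X) (G : Set X)
    (Rmax : ℝ) (hRmax : Rmax < 0)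
    (h_absorbing : ∀ x ∈ G, ∀ u w, F x u w ∈ G)
    (h_goal_reward : ∀ x ∈ G, ∀ u, r x u = 0)
    (h_out_reward : ∀ x ∉ G, ∀ u, r x u ≤ Rmax)
    (V : X → ℝ) (Q : X → U → ℝ) (ustar : X → U)
    (hBellman : ∀ x u, Q x u = ∫ w, (r x u + γ * V (F x u w)) ∂ν)
    (hOpt : ∀ x, V x = Q x (ustar x))
    (hMax : ∀ x u, Q x u ≤ V x)
    (hInt : ∀ x u, Integrable (fun w => V (F x u w)) ν)
    (Wfun : X → ℝ) (hW : ∀ x, Wfun x = -V x)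
    (η : ℝ) (hη : η ∈ Set.Ioc (0 : ℝ) |Rmax|)
    (Wmax : ℝ) (hWmax : Wmax < (|Rmax| - γ * η) / (1 - γ)) (hWmaxPos : 0 < Wmax) :
    ∀ x ∉ G, 0 < Wfun x → Wfun x ≤ Wmax →
      (∫ w, Wfun (F x (ustar x) w) ∂ν) - Wfun x ≤ -min (Wfun x) η := by
  intro x hxG hWpos hWle
  obtain ⟨hγ0, hγ1⟩ := hγ
  obtain ⟨hη0, hηR⟩ := hη
  have habs : |Rmax| = -Rmax := abs_of_neg hRmax
  -- Bellman identity at optimal action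
  have hVeq : V x = r x (ustar x) + γ * ∫ w, V (F x (ustar x) w) ∂ν := by
    rw [hOpt x, hBellman x (ustar x)]
    rw [integral_add (integrable_const _) ((hInt x (ustar x)).const_mul γ),
      integral_const, integral_const_mul]
    simp
  have hIW : (∫ w, Wfun (F x (ustar x) w) ∂ν) = - ∫ w, V (F x (ustar x) w) ∂ν := by
    rw [← integral_neg]
    exact integral_congr_ae (Filter.Eventually.of_forall fun w => hW _)
  have hr : r x (ustar x) ≤ Rmax := h_out_reward x hxG (ustar x)
  set I := ∫ w, V (F x (ustar x) w) ∂ν with hI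
  have hWx : Wfun x = -V x := hW x
  -- ΔW = ((1-γ) Wfun x + r)/γ
  have key : γ * ((∫ w, Wfun (F x (ustar x) w) ∂ν) - Wfun x)
      = (1 - γ) * Wfun x + r x (ustar x) := by
    rw [hIW, hWx]
    have : -V x = -(r x (ustar x) + γ * I) := by rw [hVeq]
    nlinarith [this]
  have hmin : γ * (-min (Wfun x) η) ≥ (1 - γ) * Wfun x + Rmax := by
    rcases le_total (Wfun x) η with h | h
    · rw [min_eq_left h]
      have : Wfun x ≤ -Rmax := le_trans h (habs ▸ hηR)
      nlinarith
    · rw [min_eq_right h]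
      have hW2 : Wfun x ≤ (|Rmax| - γ * η) / (1 - γ) := le_of_lt (lt_of_le_of_lt hWle hWmax)
      have h1γ : (0:ℝ) < 1 - γ := by linarith
      rw [le_div_iff₀ h1γ] at hW2
      rw [habs] at hW2
      nlinarith
  have := hr
  nlinarith
end
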